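/- Combining the previous two facts: let G be a finite group acting diagonally on the finite set S × Z with G-invariant metric d, and let p be a diagonally G-invariant probability mass function with product of marginals q = p_S ⊗ p_Z. For any 1-Lipschitz f : S × Z → ℝ, the group average f̃ is 1-Lipschitz, G-invariant, and achieves the same dual objective value: E_p[f̃] − E_q[f̃] = E_p[f] − E_q[f]. Consequently, sup over G-invariant 1-Lipschitz f of (E_p[f] − E_q[f]) equals sup over all 1-Lipschitz f of (E_p[f] − E_q[f]). -/

import Mathlib

/-- Under a diagonally G-invariant joint distribution, group averaging a
1-Lipschitz scoring function yields a G-invariant 1-Lipschitz function with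
the same dual objective value, and hence the supremum of the Kantorovich dual
objective over G-invariant 1-Lipschitz functions equals the supremum over all
1-Lipschitz functions. -/
theorem giwdm_equals_wdm
    {G S Z : Type*} [Group G] [Fintype G] [Fintype S] [Fintype Z]
    [MulAction G S] [MulAction G Z]
    (d : S × Z → S × Z → ℝ)
    (hd_eq : ∀ x y, d x y = 0 ↔ x = y)
    (hd_symm : ∀ x y, d x y = d y x)
    (hd_tri : ∀ x y z, d x z ≤ d x y + d y z)
    (hd_inv : ∀ (g : G) (x y : S × Z),
      d (g • x.1, g • x.2) (g • y.1, g • y.2) = d x y)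
    (p : S × Z → ℝ)
    (hp_nonneg : ∀ x, 0 ≤ p x)
    (hp_sum : ∑ x : S × Z, p x = 1)
    (hp_inv : ∀ (g : G) (s : S) (z : Z), p (g • s, g • z) = p (s, z)) :
    (∀ f : S × Z → ℝ, (∀ x y, |f x - f y| ≤ d x y) →
      (∀ x y, |(((1 : ℝ) / (Fintype.card G)) * ∑ g : G, f (g • x.1, g • x.2)) -
              (((1 : ℝ) / (Fintype.card G)) * ∑ g : G, f (g • y.1, g • y.2))|
          ≤ d x y) ∧
      (∀ (h : G) (s : S) (z : Z),
        ((1 : ℝ) / (Fintype.card G)) * ∑ g : G, f (g • (h • s), g • (h • z)) =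
        ((1 : ℝ) / (Fintype.card G)) * ∑ g : G, f (g • s, g • z)) ∧
      ((∑ x : S × Z,
          (((1 : ℝ) / (Fintype.card G)) * ∑ g : G, f (g • x.1, g • x.2)) * p x) -
        ∑ s : S, ∑ z : Z,
          (((1 : ℝ) / (Fintype.card G)) * ∑ g : G, f (g • s, g • z)) *
            ((∑ z' : Z, p (s, z')) * (∑ s' : S, p (s', z))) =
        (∑ x : S × Z, f x * p x) -
        ∑ s : S, ∑ z : Z,
          f (s, z) * ((∑ z' : Z, p (s, z')) * (∑ s' : S, p (s', z))))) ∧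
    sSup {v : ℝ | ∃ f : S × Z → ℝ,
        (∀ x y, |f x - f y| ≤ d x y) ∧
        (∀ (g : G) (s : S) (z : Z), f (g • s, g • z) = f (s, z)) ∧
        v = (∑ x : S × Z, f x * p x) -
            ∑ s : S, ∑ z : Z,
              f (s, z) * ((∑ z' : Z, p (s, z')) * (∑ s' : S, p (s', z)))} =
    sSup {v : ℝ | ∃ f : S × Z → ℝ,
        (∀ x y, |f x - f y| ≤ d x y) ∧
        v = (∑ x : S × Z, f x * p x) -
            ∑ s : S, ∑ z : Z,
              f (s, z) * ((∑ z' : Z, p (s, z')) * (∑ s' : S, p (s', z)))} := by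

  classical
  have hcard : (0:ℝ) < (Fintype.card G : ℝ) := by
    exact_mod_cast Fintype.card_pos
  set c : ℝ := (1:ℝ) / (Fintype.card G) with hc
  have hc_nonneg : 0 ≤ c := by positivity
  have hcn : c * (Fintype.card G : ℝ) = 1 := by
    rw [hc, one_div, inv_mul_cancel₀ hcard.ne']
  -- marginal invariance
  have hpS_inv : ∀ (g : G) (s : S), (∑ z' : Z, p (g • s, z')) = ∑ z' : Z, p (s, z') := by
    intro g s
    exact (Fintype.sum_equiv (MulAction.toPerm g) (fun z' => p (s, z'))
      (fun z' => p (g • s, z')) (fun z' => (hp_inv g s z').symm)).symm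
  have hpZ_inv : ∀ (g : G) (z : Z), (∑ s' : S, p (s', g • z)) = ∑ s' : S, p (s', z) := by
    intro g z
    exact (Fintype.sum_equiv (MulAction.toPerm g) (fun s' => p (s', z))
      (fun s' => p (s', g • z)) (fun s' => (hp_inv g s' z).symm)).symm
  -- invariance of E_p under the action
  have hEp : ∀ (g : G) (f : S × Z → ℝ),
      (∑ x : S × Z, f (g • x.1, g • x.2) * p x) = ∑ x : S × Z, f x * p x := by
    intro g f
    apply Fintype.sum_equiv (Equiv.prodCongr (MulAction.toPerm g) (MulAction.toPerm g))
    intro x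
    simp only [Equiv.prodCongr_apply, MulAction.toPerm_apply, Prod.map]
    rw [show ((g • x.1, g • x.2) : S × Z) = (g • x.1, g • x.2) from rfl]
    congr 1
    exact (hp_inv g x.1 x.2).symm
  -- invariance of E_q under the action
  have hEq : ∀ (g : G) (f : S × Z → ℝ),
      (∑ s : S, ∑ z : Z, f (g • s, g • z) *
          ((∑ z' : Z, p (s, z')) * (∑ s' : S, p (s', z)))) =
      ∑ s : S, ∑ z : Z, f (s, z) * ((∑ z' : Z, p (s, z')) * (∑ s' : S, p (s', z))) := by
    intro g f
    apply Fintype.sum_equiv (MulAction.toPerm g)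
    intro s
    apply Fintype.sum_equiv (MulAction.toPerm g)
    intro z
    simp only [MulAction.toPerm_apply]
    rw [hpS_inv g s, hpZ_inv g z]
  have main : ∀ f : S × Z → ℝ, (∀ x y, |f x - f y| ≤ d x y) →
      (∀ x y, |(c * ∑ g : G, f (g • x.1, g • x.2)) -
              (c * ∑ g : G, f (g • y.1, g • y.2))| ≤ d x y) ∧
      (∀ (h : G) (s : S) (z : Z),
        c * ∑ g : G, f (g • (h • s), g • (h • z)) = c * ∑ g : G, f (g • s, g • z)) ∧
      ((∑ x : S × Z, (c * ∑ g : G, f (g • x.1, g • x.2)) * p x) -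
        ∑ s : S, ∑ z : Z, (c * ∑ g : G, f (g • s, g • z)) *
            ((∑ z' : Z, p (s, z')) * (∑ s' : S, p (s', z))) =
        (∑ x : S × Z, f x * p x) -
        ∑ s : S, ∑ z : Z, f (s, z) * ((∑ z' : Z, p (s, z')) * (∑ s' : S, p (s', z)))) := by
    intro f hf
    refine ⟨?_, ?_, ?_⟩
    · -- Lipschitz
      intro x y
      rw [← mul_sub, ← Finset.sum_sub_distrib, abs_mul, abs_of_nonneg hc_nonneg]
      calc c * |∑ g : G, (f (g • x.1, g • x.2) - f (g • y.1, g • y.2))|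
          ≤ c * ∑ g : G, |f (g • x.1, g • x.2) - f (g • y.1, g • y.2)| := by
            exact mul_le_mul_of_nonneg_left (Finset.abs_sum_le_sum_abs _ _) hc_nonneg
        _ ≤ c * ∑ g : G, d x y := by
            refine mul_le_mul_of_nonneg_left (Finset.sum_le_sum fun g _ => ?_) hc_nonneg
            calc |f (g • x.1, g • x.2) - f (g • y.1, g • y.2)|
                ≤ d (g • x.1, g • x.2) (g • y.1, g • y.2) := hf _ _
              _ = d x y := hd_inv g x y
        _ = d x y := by
            rw [Finset.sum_const, Finset.card_univ, nsmul_eq_mul, ← mul_assoc, hcn, one_mul]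
    · -- invariance
      intro h s z
      congr 1
      apply Fintype.sum_equiv (Equiv.mulRight h)
      intro g
      simp [mul_smul]
    · -- equal dual value
      have e1 : (∑ x : S × Z, (c * ∑ g : G, f (g • x.1, g • x.2)) * p x) =
          ∑ x : S × Z, f x * p x := by
        calc (∑ x : S × Z, (c * ∑ g : G, f (g • x.1, g • x.2)) * p x)
            = ∑ x : S × Z, ∑ g : G, c * (f (g • x.1, g • x.2) * p x) := by
              refine Finset.sum_congr rfl fun x _ => ?_
              rw [mul_assoc, Finset.sum_mul, Finset.mul_sum]
          _ = ∑ g : G, ∑ x : S × Z, c * (f (g • x.1, g • x.2) * p x) := Finset.sum_comm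
          _ = c * ∑ g : G, ∑ x : S × Z, f (g • x.1, g • x.2) * p x := by
              simp_rw [← Finset.mul_sum]
          _ = c * ∑ g : G, ∑ x : S × Z, f x * p x := by
              congr 1; exact Finset.sum_congr rfl fun g _ => hEp g f
          _ = ∑ x : S × Z, f x * p x := by
              rw [Finset.sum_const, Finset.card_univ, nsmul_eq_mul, ← mul_assoc, hcn, one_mul]
      have e2 : (∑ s : S, ∑ z : Z, (c * ∑ g : G, f (g • s, g • z)) *
            ((∑ z' : Z, p (s, z')) * (∑ s' : S, p (s', z)))) =
          ∑ s : S, ∑ z : Z, f (s, z) * ((∑ z' : Z, p (s, z')) * (∑ s' : S, p (s', z))) := by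
        calc (∑ s : S, ∑ z : Z, (c * ∑ g : G, f (g • s, g • z)) *
              ((∑ z' : Z, p (s, z')) * (∑ s' : S, p (s', z))))
            = ∑ s : S, ∑ z : Z, ∑ g : G, c * (f (g • s, g • z) *
                ((∑ z' : Z, p (s, z')) * (∑ s' : S, p (s', z)))) := by
              refine Finset.sum_congr rfl fun s _ => Finset.sum_congr rfl fun z _ => ?_
              rw [mul_assoc, Finset.sum_mul, Finset.mul_sum]
          _ = ∑ s : S, ∑ g : G, ∑ z : Z, c * (f (g • s, g • z) *
                ((∑ z' : Z, p (s, z')) * (∑ s' : S, p (s', z)))) := by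
              exact Finset.sum_congr rfl fun s _ => Finset.sum_comm
          _ = ∑ g : G, ∑ s : S, ∑ z : Z, c * (f (g • s, g • z) *
                ((∑ z' : Z, p (s, z')) * (∑ s' : S, p (s', z)))) := Finset.sum_comm
          _ = c * ∑ g : G, ∑ s : S, ∑ z : Z, f (g • s, g • z) *
                ((∑ z' : Z, p (s, z')) * (∑ s' : S, p (s', z))) := by
              simp_rw [← Finset.mul_sum]
          _ = c * ∑ g : G, ∑ s : S, ∑ z : Z, f (s, z) *
                ((∑ z' : Z, p (s, z')) * (∑ s' : S, p (s', z))) := by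
              congr 1; exact Finset.sum_congr rfl fun g _ => hEq g f
          _ = ∑ s : S, ∑ z : Z, f (s, z) *
                ((∑ z' : Z, p (s, z')) * (∑ s' : S, p (s', z))) := by
              rw [Finset.sum_const, Finset.card_univ, nsmul_eq_mul, ← mul_assoc, hcn, one_mul]
      rw [e1, e2]
  refine ⟨main, ?_⟩
  have hsets : {v : ℝ | ∃ f : S × Z → ℝ,
        (∀ x y, |f x - f y| ≤ d x y) ∧
        (∀ (g : G) (s : S) (z : Z), f (g • s, g • z) = f (s, z)) ∧
        v = (∑ x : S × Z, f x * p x) -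
            ∑ s : S, ∑ z : Z,
              f (s, z) * ((∑ z' : Z, p (s, z')) * (∑ s' : S, p (s', z)))} =
      {v : ℝ | ∃ f : S × Z → ℝ,
        (∀ x y, |f x - f y| ≤ d x y) ∧
        v = (∑ x : S × Z, f x * p x) -
            ∑ s : S, ∑ z : Z,
              f (s, z) * ((∑ z' : Z, p (s, z')) * (∑ s' : S, p (s', z)))} := by
    ext v
    constructor
    · rintro ⟨f, hl, _, hv⟩
      exact ⟨f, hl, hv⟩
    · rintro ⟨f, hl, hv⟩
      obtain ⟨h1, h2, h3⟩ := main f hl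
      refine ⟨fun x => c * ∑ g : G, f (g • x.1, g • x.2), h1, fun g s z => h2 g s z, ?_⟩
      rw [hv, ← h3]
  rw [hsets]
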